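/- For n ≥ 2, the polynomial Q_n(x) = Σ_{k=0}^{n-2} ⟨n-1, k⟩ · x^{k+1} · (x-1)^{n-1-k} satisfies Q_n(x) = Σ_{k=1}^{n} (-1)^{n-k} · (k-1)! · {n, k} · x^k, where {n,k} is the Stirling number of the second kind. -/

import Mathlib

/-!
Both sides, as polynomials in `X`, arise from `X` by iterating `f ↦ X (X - 1) f'`. On the
Eulerian side this operator sends `X^(k+1) (X-1)^(m-k)` to
`(k+1) X^(k+1) (X-1)^(m+1-k) + (m-k) X^(k+2) (X-1)^(m-k)`, which is exactly the recurrence of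
`⟨m, k⟩`; on the Stirling side it acts on the coefficients `c(n, k) = (-1)^(n-k) (k-1)! {n, k}`
by `c(n+1, k+1) = k c(n, k) - (k+1) c(n, k+1)` for `n ≥ 1`, which is the recurrence of `{n, k}`.
(For `x < 1/2` and `t = x / (x - 1)` the left side is `(-1)^n ∑ j^(n-1) t^j`, and the operator
becomes `-t d/dt`.)
-/
/-- Eulerian numbers `⟨n, k⟩`. -/
def eulerian : ℕ → ℕ → ℕ
  | 0, 0 => 1
  | 0, _ + 1 => 0
  | _ + 1, 0 => 1
  | n + 1, k + 1 => (k + 2) * eulerian n (k + 1) + (n - k) * eulerian n k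

/-- Stirling numbers of the second kind. -/
def stirlingSecond : ℕ → ℕ → ℕ
  | 0, 0 => 1
  | 0, _ + 1 => 0
  | _ + 1, 0 => 0
  | n + 1, k + 1 => (k + 1) * stirlingSecond n (k + 1) + stirlingSecond n k

open Polynomial Finset
open scoped Nat

theorem eulerian_zero_right : ∀ m, eulerian m 0 = 1
  | 0 => rfl
  | _ + 1 => rfl

theorem eulerian_eq_zero_of_lt : ∀ {m k : ℕ}, m < k → eulerian m k = 0
  | 0, _ + 1, _ => rfl
  | m + 1, k + 1, h => by
    rw [eulerian, eulerian_eq_zero_of_lt (by omega : m < k + 1),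
      eulerian_eq_zero_of_lt (by omega : m < k), mul_zero, mul_zero, add_zero]

theorem eulerian_succ_self (m : ℕ) : eulerian (m + 1) (m + 1) = 0 := by
  rw [eulerian, eulerian_eq_zero_of_lt (Nat.lt_succ_self m), Nat.sub_self, mul_zero, zero_mul,
    add_zero]

theorem stirlingSecond_eq_nat_stirlingSecond : stirlingSecond = Nat.stirlingSecond := by
  funext n k
  induction n generalizing k with
  | zero => cases k <;> rfl
  | succ n ih => cases k <;> simp [stirlingSecond, Nat.stirlingSecond_succ_succ, ih]

def signedStirling (n k : ℕ) : ℤ := (-1) ^ (n - k) * (k - 1)! * stirlingSecond n k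

theorem signedStirling_eq_zero_of_lt {n k : ℕ} (h : n < k) : signedStirling n k = 0 := by
  simp [signedStirling, stirlingSecond_eq_nat_stirlingSecond, Nat.stirlingSecond_eq_zero_of_lt h]

theorem signedStirling_succ_zero (m : ℕ) : signedStirling (m + 1) 0 = 0 := by
  simp [signedStirling, stirlingSecond_eq_nat_stirlingSecond]

theorem signedStirling_succ_succ (m k : ℕ) :
    signedStirling (m + 2) (k + 1) =
      k * signedStirling (m + 1) k - (k + 1) * signedStirling (m + 1) (k + 1) := by
  simp only [signedStirling, stirlingSecond_eq_nat_stirlingSecond]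
  have hfirst : (k : ℤ) * (k - 1)! * Nat.stirlingSecond (m + 1) k =
      k ! * Nat.stirlingSecond (m + 1) k := by
    cases k with
    | zero => simp
    | succ k => push_cast [Nat.add_sub_cancel, Nat.factorial_succ]; ring
  have hsecond : (-1 : ℤ) ^ (m + 1 - k) * Nat.stirlingSecond (m + 1) (k + 1) =
      -(-1) ^ (m - k) * Nat.stirlingSecond (m + 1) (k + 1) := by
    rcases le_or_gt k m with h | h
    · rw [Nat.sub_add_comm h, pow_succ]; ring
    · simp [Nat.stirlingSecond_eq_zero_of_lt (by omega : m + 1 < k + 1)]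
  rw [Nat.stirlingSecond_succ_succ, show m + 2 - (k + 1) = m + 1 - k by omega]
  simp only [Nat.add_sub_add_right]
  push_cast [Nat.factorial_succ]
  linear_combination -(-1 : ℤ) ^ (m + 1 - k) * hfirst + (k + 1) * k ! * hsecond

theorem sum_range_shift_of_eq_zero {M : Type*} [AddCommMonoid M] (f : ℕ → M) (n : ℕ)
    (hf : f n = 0) : ∑ k ∈ range n, f k = ∑ k ∈ range n, f (k + 1) + f 0 := by
  rw [← sum_range_succ', sum_range_succ, hf, add_zero]

section
variable {R : Type*} [CommRing R]

theorem X_mul_X_sub_one_mul_derivative_X_pow (k : ℕ) :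
    X * (X - 1) * derivative (X ^ k : R[X]) = (k : R[X]) * (X ^ (k + 1) - X ^ k) := by
  cases k with
  | zero => simp
  | succ k => rw [derivative_X_pow, C_eq_natCast, Nat.add_sub_cancel]; ring

theorem X_mul_X_sub_one_mul_derivative_X_pow_mul_X_sub_one_pow (a j : ℕ) :
    X * (X - 1) * derivative (X ^ a * (X - 1) ^ j : R[X]) =
      (a : R[X]) * X ^ a * (X - 1) ^ (j + 1) + (j : R[X]) * X ^ (a + 1) * (X - 1) ^ j := by
  have hX : X * (X - 1) * derivative (X ^ a : R[X]) = (a : R[X]) * X ^ a * (X - 1) := by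
    rw [X_mul_X_sub_one_mul_derivative_X_pow]; ring
  have hX1 : X * (X - 1) * derivative ((X - 1) ^ j : R[X]) = (j : R[X]) * X * (X - 1) ^ j := by
    cases j with
    | zero => simp
    | succ j => rw [← C_1, derivative_X_sub_C_pow, C_eq_natCast]; push_cast; ring
  rw [derivative_mul]
  linear_combination (X - 1) ^ j * hX + X ^ a * hX1

-- `eulerianSum m` and `stirlingSum m` are the two sides of the identity for `n = m + 1`.
noncomputable def eulerianSum (m : ℕ) : R[X] :=
  ∑ k ∈ range (m + 1), (eulerian m k : R[X]) * X ^ (k + 1) * (X - 1) ^ (m - k)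

noncomputable def stirlingSum (m : ℕ) : R[X] :=
  ∑ k ∈ Icc 1 (m + 1), (signedStirling (m + 1) k : R[X]) * X ^ k

theorem eulerianSum_succ (m : ℕ) :
    eulerianSum (m + 1) = X * (X - 1) * derivative (eulerianSum m : R[X]) := by
  have hterm : ∀ k ∈ range (m + 1),
      X * (X - 1) * derivative ((eulerian m k : R[X]) * X ^ (k + 1) * (X - 1) ^ (m - k)) =
        (((k + 1) * eulerian m k : ℕ) : R[X]) * X ^ (k + 1) * (X - 1) ^ (m + 1 - k) +
          (((m - k) * eulerian m k : ℕ) : R[X]) * X ^ (k + 2) * (X - 1) ^ (m - k) := by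
    intro k hk
    rw [mul_assoc _ (X ^ _), derivative_natCast_mul, mul_left_comm,
      X_mul_X_sub_one_mul_derivative_X_pow_mul_X_sub_one_pow,
      Nat.sub_add_comm (mem_range_succ_iff.mp hk)]
    push_cast
    ring
  have hshift : ∑ k ∈ range (m + 1),
      (((k + 1) * eulerian m k : ℕ) : R[X]) * X ^ (k + 1) * (X - 1) ^ (m + 1 - k) =
        ∑ k ∈ range (m + 1),
          (((k + 2) * eulerian m (k + 1) : ℕ) : R[X]) * X ^ (k + 2) * (X - 1) ^ (m - k) +
        X * (X - 1) ^ (m + 1) := by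
    rw [sum_range_shift_of_eq_zero _ (m + 1) (by simp [eulerian_eq_zero_of_lt])]
    norm_num [Nat.add_sub_add_right, eulerian_zero_right, add_assoc]
  unfold eulerianSum
  rw [derivative_sum, mul_sum, sum_congr rfl hterm, sum_add_distrib, hshift, sum_range_succ']
  simp only [eulerian, Nat.add_sub_add_right]
  push_cast [add_mul, sum_add_distrib]
  ring

theorem stirlingSum_eq_sum_range (m : ℕ) :
    stirlingSum m = ∑ k ∈ range (m + 2), (signedStirling (m + 1) k : R[X]) * X ^ k := by
  refine sum_subset (fun k hk => ?_) (fun k hk hk' => ?_)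
  · simp only [mem_Icc, mem_range] at hk ⊢; omega
  · obtain rfl : k = 0 := by simp only [mem_Icc, mem_range] at hk hk'; omega
    simp [signedStirling_succ_zero]

theorem stirlingSum_succ (m : ℕ) :
    stirlingSum (m + 1) = X * (X - 1) * derivative (stirlingSum m : R[X]) := by
  have hshift : ∑ k ∈ range (m + 2), (k * signedStirling (m + 1) k : R[X]) * X ^ k =
      ∑ k ∈ range (m + 2), ((k + 1) * signedStirling (m + 1) (k + 1) : R[X]) * X ^ (k + 1) := by
    rw [sum_range_shift_of_eq_zero _ (m + 2) (by simp [signedStirling_eq_zero_of_lt])]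
    simp
  have hterm : ∀ k ∈ range (m + 2),
      X * (X - 1) * ((signedStirling (m + 1) k : R[X]) * derivative (X ^ k)) =
        (k * signedStirling (m + 1) k : R[X]) * X ^ (k + 1) -
          (k * signedStirling (m + 1) k : R[X]) * X ^ k := by
    intro k _
    rw [mul_left_comm, X_mul_X_sub_one_mul_derivative_X_pow]
    ring
  rw [stirlingSum_eq_sum_range, stirlingSum_eq_sum_range, sum_range_succ', derivative_sum, mul_sum]
  simp only [signedStirling_succ_succ, signedStirling_succ_zero, derivative_intCast_mul]
  rw [sum_congr rfl hterm, sum_sub_distrib, hshift, ← sum_sub_distrib]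
  push_cast [sub_mul]
  simp

theorem eulerianSum_eq_stirlingSum (m : ℕ) :
    (eulerianSum m : R[X]) = stirlingSum m := by
  induction m with
  | zero => simp [eulerianSum, stirlingSum, signedStirling, stirlingSecond, eulerian]
  | succ m ih => rw [eulerianSum_succ, stirlingSum_succ, ih]

end

theorem stmt_11 (n : ℕ) (hn : 2 ≤ n) (x : ℝ) :
    ∑ k ∈ Finset.range (n - 1),
        (eulerian (n - 1) k : ℝ) * x ^ (k + 1) * (x - 1) ^ (n - 1 - k) =
      ∑ k ∈ Finset.Icc 1 n,
        (-1 : ℝ) ^ (n - k) * (Nat.factorial (k - 1)) * stirlingSecond n k * x ^ k := by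
  obtain ⟨m, rfl⟩ : ∃ m, n = m + 2 := ⟨n - 2, by omega⟩
  have h := congrArg (eval x) (eulerianSum_eq_stirlingSum (R := ℝ) (m + 1))
  rw [eulerianSum, sum_range_succ, eulerian_succ_self, stirlingSum] at h
  simpa [eval_finsetSum, signedStirling] using h
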